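/- arXiv:2308.05895 — 4 statements merged into one kernel-verified Lean document; each statement's English description precedes it below -/
import Mathlib

section
/- The specific 3×3 matrix A* = [[0.70, 0.58, 0.54], [0.58, 0.63, 0.19], [0.54, 0.19, 0.71]] is not positive semi-definite (it has a negative eigenvalue), even though the corresponding 9×9 block correlation matrix C with group sizes (3,3,3), within-group correlations (0.70, 0.63, 0.71), and between-group correlations ρ_12 = 0.58, ρ_13 = 0.54, ρ_23 = 0.19 is positive definite. -/
open Matrix

/-- The block correlation matrix determined by a group assignment `g` and
block parameters `ρ`: unit diagonal, off-diagonal entry `ρ (g i) (g j)`. -/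
def blockCorr {n K : ℕ} (g : Fin n → Fin K) (ρ : Fin K → Fin K → ℝ) :
    Matrix (Fin n) (Fin n) ℝ :=
  Matrix.of fun i j => if i = j then 1 else ρ (g i) (g j)

/-- The specific 3×3 matrix `A*` from the paper's counterexample. -/
noncomputable def AstarEx : Matrix (Fin 3) (Fin 3) ℝ :=
  !![0.70, 0.58, 0.54; 0.58, 0.63, 0.19; 0.54, 0.19, 0.71]

/-- Group assignment for the 9×9 example: three consecutive groups of size 3. -/
def gEx : Fin 9 → Fin 3 := fun i => ⟨i.val / 3, by omega⟩

theorem sum9' {M : Type*} [AddCommMonoid M] (f : Fin 9 → M) :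
    ∑ i, f i = f 0 + f 1 + f 2 + f 3 + f 4 + f 5 + f 6 + f 7 + f 8 := by
  rw [Fin.sum_univ_castSucc, Fin.sum_univ_eight]
  rfl

set_option maxHeartbeats 1000000 in
theorem quadIdent (x : Fin 9 → ℝ) :
    star x ⬝ᵥ (blockCorr gEx (fun k l => AstarEx k l)) *ᵥ x =
      (1/4 : ℝ) * (x 0^2 + x 1^2 + x 2^2 + x 3^2 + x 4^2 + x 5^2 + x 6^2 + x 7^2 + x 8^2) +
      (3/4) * (x 0 + (14/15) * x 1 + (14/15) * x 2 + (58/75) * x 3 + (58/75) * x 4 + (58/75) * x 5 + (18/25) * x 6 + (18/25) * x 7 + (18/25) * x 8)^2 +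
      (29/300) * (x 1 + (14/29) * x 2 + (2/5) * x 3 + (2/5) * x 4 + (2/5) * x 5 + (54/145) * x 6 + (54/145) * x 7 + (54/145) * x 8)^2 +
      (43/580) * (x 2 + (58/215) * x 3 + (58/215) * x 4 + (58/215) * x 5 + (54/215) * x 6 + (54/215) * x 7 + (54/215) * x 8)^2 +
      (6033/21500) * (x 3 + (1151/2011) * x 4 + (1151/2011) * x 5 + (-5311/6033) * x 6 + (-5311/6033) * x 7 + (-5311/6033) * x 8)^2 +
      (9486/50275) * (x 4 + (1151/3162) * x 5 + (-5311/9486) * x 6 + (-5311/9486) * x 7 + (-5311/9486) * x 8)^2 +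
      (4313/26350) * (x 5 + (-5311/12939) * x 6 + (-5311/12939) * x 7 + (-5311/12939) * x 8)^2 +
      (4198/107825) * (x 6 + (-115/4198) * x 7 + (-115/4198) * x 8)^2 +
      (4083/104950) * (x 7 + (-115/4083) * x 8)^2 +
      (3968/102075) * (x 8)^2 := by
  simp only [dotProduct, mulVec, sum9', Pi.star_apply, star_trivial]
  norm_num [blockCorr, gEx, AstarEx, Fin.ext_iff, Fin.coe_ofNat_eq_mod,
    Matrix.cons_val_zero, Matrix.cons_val_one, Matrix.head_cons]
  ring

/-- The explicit `A*` is not positive semi-definite, while the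
corresponding 9×9 block correlation matrix is positive definite. -/
theorem stmt_10 :
    ¬ AstarEx.PosSemidef ∧ (blockCorr gEx (fun k l => AstarEx k l)).PosDef := by
  constructor
  · intro h
    have := h.dotProduct_mulVec_nonneg ![(1:ℝ), -73/100, -11/20]
    simp only [AstarEx, dotProduct, mulVec, Fin.sum_univ_succ, Fin.sum_univ_zero, Pi.star_apply,
      star_trivial, Matrix.cons_val', Matrix.cons_val_zero, Matrix.cons_val_one, Matrix.head_cons,
      Matrix.empty_val', Matrix.cons_val_fin_one, Matrix.head_fin_const] at this
    norm_num [Fin.succ_one_eq_two, Matrix.cons_val_two, Matrix.tail_cons, Matrix.head_cons] at this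
  · refine posDef_iff_dotProduct_mulVec.mpr ⟨?_, ?_⟩
    · have hsymm : ∀ a b : Fin 3, AstarEx a b = AstarEx b a := by
        intro a b; fin_cases a <;> fin_cases b <;> norm_num [AstarEx]
      ext i j
      simp only [blockCorr, conjTranspose_apply, Matrix.of_apply, star_trivial]
      rcases eq_or_ne i j with rfl | hij
      · simp
      · rw [if_neg (Ne.symm hij), if_neg hij, hsymm]
    · intro x hx
      rw [quadIdent x]
      have hpos : (0:ℝ) < x 0^2 + x 1^2 + x 2^2 + x 3^2 + x 4^2 + x 5^2 + x 6^2 + x 7^2 + x 8^2 := by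
        rcases Function.ne_iff.mp hx with ⟨i, hi⟩
        fin_cases i <;>
          simp only [Pi.zero_apply, Fin.zero_eta, Fin.mk_one,
            show ∀ h : 2 < 9, (⟨2,h⟩:Fin 9) = 2 from fun _ => rfl,
            show ∀ h : 3 < 9, (⟨3,h⟩:Fin 9) = 3 from fun _ => rfl,
            show ∀ h : 4 < 9, (⟨4,h⟩:Fin 9) = 4 from fun _ => rfl,
            show ∀ h : 5 < 9, (⟨5,h⟩:Fin 9) = 5 from fun _ => rfl,
            show ∀ h : 6 < 9, (⟨6,h⟩:Fin 9) = 6 from fun _ => rfl,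
            show ∀ h : 7 < 9, (⟨7,h⟩:Fin 9) = 7 from fun _ => rfl,
            show ∀ h : 8 < 9, (⟨8,h⟩:Fin 9) = 8 from fun _ => rfl] at hi <;>
          nlinarith [sq_nonneg (x 0), sq_nonneg (x 1), sq_nonneg (x 2), sq_nonneg (x 3),
            sq_nonneg (x 4), sq_nonneg (x 5), sq_nonneg (x 6), sq_nonneg (x 7), sq_nonneg (x 8),
            sq_pos_of_ne_zero hi]
      positivity
end

section
/- Let C be the block correlation matrix with group sizes n_1,…,n_K and parameters ρ_kl with |ρ_kk| < 1 for all k. Then C is positive definite if and only if the K×K matrix A with diagonal entries 1 + (n_k − 1)ρ_kk and off-diagonal entries ρ_kl √(n_k n_l) is positive definite. -/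
open Matrix

/-- The reduced `K × K` matrix `A` with `A_kk = 1 + (n_k - 1) ρ_kk` and
`A_kl = ρ_kl √(n_k n_l)` for `k ≠ l`. -/
noncomputable def reducedA (K : ℕ) (nsize : Fin K → ℕ) (ρ : Fin K → Fin K → ℝ) :
    Matrix (Fin K) (Fin K) ℝ :=
  Matrix.of fun k l =>
    if k = l then 1 + ((nsize k : ℝ) - 1) * ρ k k
    else ρ k l * Real.sqrt ((nsize k : ℝ) * (nsize l : ℝ))

namespace BlockCorrAux

variable {n K : ℕ}

/-- Group sum of a vector. -/
noncomputable def S (g : Fin n → Fin K) (x : Fin n → ℝ) (k : Fin K) : ℝ :=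
  ∑ i ∈ Finset.univ.filter (fun i => g i = k), x i

/-- Group sum of squares of a vector. -/
noncomputable def Q (g : Fin n → Fin K) (x : Fin n → ℝ) (k : Fin K) : ℝ :=
  ∑ i ∈ Finset.univ.filter (fun i => g i = k), (x i) ^ 2

lemma quadC (g : Fin n → Fin K) (ρ : Fin K → Fin K → ℝ) (x : Fin n → ℝ) :
    x ⬝ᵥ (blockCorr g ρ) *ᵥ x =
      ∑ k, ∑ l, (if k = l then (1 - ρ k k) * Q g x k + ρ k k * (S g x k) ^ 2
                 else ρ k l * (S g x k * S g x l)) := by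
  have h1 : x ⬝ᵥ (blockCorr g ρ) *ᵥ x = ∑ i, ∑ j, x i * (blockCorr g ρ i j * x j) := by
    simp [dotProduct, Matrix.mulVec, Finset.mul_sum]
  rw [h1,
    ← Finset.sum_fiberwise Finset.univ g (fun i => ∑ j, x i * (blockCorr g ρ i j * x j))]
  refine Finset.sum_congr rfl fun k _ => ?_
  have h2 : ∀ i ∈ Finset.univ.filter (fun i => g i = k),
      (∑ j, x i * (blockCorr g ρ i j * x j)) =
      ∑ l, ∑ j ∈ Finset.univ.filter (fun j => g j = l), x i * (blockCorr g ρ i j * x j) := by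
    intro i _
    rw [Finset.sum_fiberwise Finset.univ g (fun j => x i * (blockCorr g ρ i j * x j))]
  rw [Finset.sum_congr rfl h2, Finset.sum_comm]
  refine Finset.sum_congr rfl fun l _ => ?_
  by_cases hkl : k = l
  · subst hkl
    rw [if_pos rfl]
    have h3 : ∀ i ∈ Finset.univ.filter (fun i => g i = k),
        (∑ j ∈ Finset.univ.filter (fun j => g j = k), x i * (blockCorr g ρ i j * x j)) =
        ρ k k * (x i * S g x k) + (1 - ρ k k) * (x i) ^ 2 := by
      intro i hi
      simp only [Finset.mem_filter, Finset.mem_univ, true_and] at hi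
      have h4 : ∀ j ∈ Finset.univ.filter (fun j => g j = k),
          x i * (blockCorr g ρ i j * x j) =
          ρ k k * (x i * x j) + (if i = j then (1 - ρ k k) * (x i) ^ 2 else 0) := by
        intro j hj
        simp only [Finset.mem_filter, Finset.mem_univ, true_and] at hj
        by_cases hij : i = j
        · subst hij
          simp [blockCorr, hi, sq]; ring
        · simp [blockCorr, hij, hi, hj]; ring
      rw [Finset.sum_congr rfl h4, Finset.sum_add_distrib, Finset.sum_ite_eq]
      simp only [Finset.mem_filter, Finset.mem_univ, true_and, hi, if_pos]
      rw [← Finset.mul_sum, ← Finset.mul_sum, S]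
    rw [Finset.sum_congr rfl h3, Finset.sum_add_distrib, ← Finset.mul_sum, ← Finset.mul_sum,
      ← Finset.sum_mul]
    rw [show (∑ i ∈ Finset.univ.filter (fun i => g i = k), x i) = S g x k from rfl,
      show (∑ i ∈ Finset.univ.filter (fun i => g i = k), (x i) ^ 2) = Q g x k from rfl]
    ring
  · rw [if_neg hkl]
    have h3 : ∀ i ∈ Finset.univ.filter (fun i => g i = k),
        (∑ j ∈ Finset.univ.filter (fun j => g j = l), x i * (blockCorr g ρ i j * x j)) =
        ρ k l * (x i * S g x l) := by
      intro i hi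
      simp only [Finset.mem_filter, Finset.mem_univ, true_and] at hi
      have h4 : ∀ j ∈ Finset.univ.filter (fun j => g j = l),
          x i * (blockCorr g ρ i j * x j) = ρ k l * (x i * x j) := by
        intro j hj
        simp only [Finset.mem_filter, Finset.mem_univ, true_and] at hj
        have hij : i ≠ j := fun h => hkl (by rw [← hi, ← hj, h])
        simp [blockCorr, hij, hi, hj]; ring
      rw [Finset.sum_congr rfl h4, ← Finset.mul_sum, ← Finset.mul_sum, S]
    rw [Finset.sum_congr rfl h3, ← Finset.mul_sum, ← Finset.sum_mul]
    rfl

lemma quadA (nsize : Fin K → ℕ) (ρ : Fin K → Fin K → ℝ) (y : Fin K → ℝ) :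
    y ⬝ᵥ (reducedA K nsize ρ) *ᵥ y =
      ∑ k, ∑ l, (if k = l then (1 + ((nsize k : ℝ) - 1) * ρ k k) * (y k) ^ 2
                 else ρ k l * Real.sqrt ((nsize k : ℝ) * (nsize l : ℝ)) * (y k * y l)) := by
  simp only [dotProduct, Matrix.mulVec, Finset.mul_sum]
  refine Finset.sum_congr rfl fun k _ => Finset.sum_congr rfl fun l _ => ?_
  by_cases hkl : k = l
  · subst hkl; simp [reducedA, sq]; ring
  · simp [reducedA, hkl]; ring

variable (g : Fin n → Fin K) (nsize : Fin K → ℕ) (ρ : Fin K → Fin K → ℝ)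

/-- The key quadratic form identity. -/
lemma key (hn : ∀ k, 1 ≤ nsize k) (x : Fin n → ℝ) :
    x ⬝ᵥ (blockCorr g ρ) *ᵥ x =
      (∑ k, (1 - ρ k k) * (Q g x k - (S g x k) ^ 2 / (nsize k : ℝ)))
      + (fun k => S g x k / Real.sqrt (nsize k)) ⬝ᵥ
          (reducedA K nsize ρ) *ᵥ (fun k => S g x k / Real.sqrt (nsize k)) := by
  have hpos : ∀ k, (0 : ℝ) < (nsize k : ℝ) := fun k => by exact_mod_cast hn k
  have hsq : ∀ k, Real.sqrt (nsize k) * Real.sqrt (nsize k) = (nsize k : ℝ) := fun k =>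
    Real.mul_self_sqrt (le_of_lt (hpos k))
  have hsne : ∀ k, Real.sqrt (nsize k) ≠ 0 := fun k =>
    ne_of_gt (Real.sqrt_pos.mpr (hpos k))
  rw [quadC, quadA, ← Finset.sum_add_distrib]
  refine Finset.sum_congr rfl fun k _ => ?_
  rw [← Finset.add_sum_erase _ _ (Finset.mem_univ k),
    ← Finset.add_sum_erase _ _ (Finset.mem_univ k)]
  rw [if_pos rfl, if_pos rfl]
  have hoff : ∀ l ∈ Finset.univ.erase k,
      (if k = l then (1 - ρ k k) * Q g x k + ρ k k * (S g x k) ^ 2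
        else ρ k l * (S g x k * S g x l)) =
      (if k = l then (1 + ((nsize k : ℝ) - 1) * ρ k k) * (S g x k / Real.sqrt (nsize k)) ^ 2
        else ρ k l * Real.sqrt ((nsize k : ℝ) * (nsize l : ℝ)) *
          (S g x k / Real.sqrt (nsize k) * (S g x l / Real.sqrt (nsize l)))) := by
    intro l hl
    have hkl : k ≠ l := fun h => (Finset.mem_erase.mp hl).1 h.symm
    have hk := hsne k
    have hl' := hsne l
    rw [if_neg hkl, if_neg hkl, Real.sqrt_mul (le_of_lt (hpos k))]
    field_simp
  rw [Finset.sum_congr rfl hoff]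
  have hdiag : (1 - ρ k k) * Q g x k + ρ k k * (S g x k) ^ 2 =
      (1 - ρ k k) * (Q g x k - (S g x k) ^ 2 / (nsize k : ℝ)) +
      (1 + ((nsize k : ℝ) - 1) * ρ k k) * (S g x k / Real.sqrt (nsize k)) ^ 2 := by
    have h1 : (S g x k / Real.sqrt (nsize k)) ^ 2 = (S g x k) ^ 2 / (nsize k : ℝ) := by
      rw [div_pow, sq (Real.sqrt (nsize k)), hsq k]
    have hm : (nsize k : ℝ) ≠ 0 := ne_of_gt (hpos k)
    rw [h1]
    field_simp
    ring
  rw [hdiag]; ring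

end BlockCorrAux

open BlockCorrAux in
/-- A block correlation matrix with `|ρ_kk| < 1` is positive
definite iff the reduced `K × K` matrix `A` is positive definite. -/
theorem stmt_11 (n K : ℕ) (g : Fin n → Fin K) (nsize : Fin K → ℕ)
    (ρ : Fin K → Fin K → ℝ) (hsym : ∀ k l, ρ k l = ρ l k)
    (hsize : ∀ k, (Finset.univ.filter (fun i => g i = k)).card = nsize k)
    (hn : ∀ k, 1 ≤ nsize k) (hdiag : ∀ k, |ρ k k| < 1) :
    (blockCorr g ρ).PosDef ↔ (reducedA K nsize ρ).PosDef := by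
  have hpos : ∀ k, (0 : ℝ) < (nsize k : ℝ) := fun k => by exact_mod_cast hn k
  have hsq : ∀ k, Real.sqrt (nsize k) * Real.sqrt (nsize k) = (nsize k : ℝ) := fun k =>
    Real.mul_self_sqrt (le_of_lt (hpos k))
  have hsne : ∀ k, Real.sqrt (nsize k) ≠ 0 := fun k =>
    ne_of_gt (Real.sqrt_pos.mpr (hpos k))
  have hρlt : ∀ k, 0 < 1 - ρ k k := fun k => by
    have := (abs_lt.mp (hdiag k)).2; linarith
  -- Cauchy–Schwarz within each group
  have hCS : ∀ (x : Fin n → ℝ) k, 0 ≤ Q g x k - (S g x k) ^ 2 / (nsize k : ℝ) := by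
    intro x k
    have h := sq_sum_le_card_mul_sum_sq
      (s := Finset.univ.filter (fun i => g i = k)) (f := x)
    rw [hsize k] at h
    have h2 : (S g x k) ^ 2 ≤ (nsize k : ℝ) * Q g x k := by
      rw [S, Q]; exact_mod_cast h
    rw [sub_nonneg, div_le_iff₀ (hpos k), mul_comm]; exact h2
  have hermC : (blockCorr g ρ).IsHermitian := by
    refine Matrix.IsHermitian.ext fun i j => ?_
    simp only [blockCorr, Matrix.of_apply, RCLike.star_def, starRingEnd_apply, star_trivial]
    by_cases hij : i = j
    · simp [hij]
    · simp [hij, Ne.symm hij, hsym (g j) (g i)]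
  have hermA : (reducedA K nsize ρ).IsHermitian := by
    refine Matrix.IsHermitian.ext fun k l => ?_
    simp only [reducedA, Matrix.of_apply, RCLike.star_def, starRingEnd_apply, star_trivial]
    by_cases hkl : k = l
    · simp [hkl]
    · simp [hkl, Ne.symm hkl, hsym l k, mul_comm ((nsize l : ℝ))]
  rw [Matrix.posDef_iff_dotProduct_mulVec, Matrix.posDef_iff_dotProduct_mulVec]
  constructor
  · rintro ⟨_, hC⟩
    refine ⟨hermA, fun y hy => ?_⟩
    rw [star_trivial]
    set x : Fin n → ℝ := fun i => y (g i) / Real.sqrt (nsize (g i)) with hx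
    have hS : ∀ k, S g x k = Real.sqrt (nsize k) * y k := by
      intro k
      rw [S]
      have hcongr : ∀ i ∈ Finset.univ.filter (fun i => g i = k),
          x i = y k / Real.sqrt (nsize k) := by
        intro i hi
        simp only [Finset.mem_filter, Finset.mem_univ, true_and] at hi
        rw [hx]; simp [hi]
      rw [Finset.sum_congr rfl hcongr, Finset.sum_const, hsize k, nsmul_eq_mul,
        mul_div_assoc', mul_comm ((nsize k : ℝ)) (y k), mul_div_assoc, Real.div_sqrt,
        mul_comm]
    have hQ : ∀ k, Q g x k = (y k) ^ 2 := by
      intro k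
      rw [Q]
      have hcongr : ∀ i ∈ Finset.univ.filter (fun i => g i = k),
          (x i) ^ 2 = (y k) ^ 2 / (nsize k : ℝ) := by
        intro i hi
        simp only [Finset.mem_filter, Finset.mem_univ, true_and] at hi
        rw [hx]; simp only [hi]
        rw [div_pow, sq (Real.sqrt (nsize k)), hsq k]
      rw [Finset.sum_congr rfl hcongr, Finset.sum_const, hsize k, nsmul_eq_mul]
      have hm : (nsize k : ℝ) ≠ 0 := ne_of_gt (hpos k)
      field_simp
    have hY : (fun k => S g x k / Real.sqrt (nsize k)) = y := by
      funext k
      rw [hS k, mul_div_assoc]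
      have hk := hsne k
      field_simp
    have hxne : x ≠ 0 := by
      obtain ⟨k, hk⟩ := Function.ne_iff.mp hy
      have hcard : 0 < (Finset.univ.filter (fun i => g i = k)).card := by
        rw [hsize k]; exact hn k
      obtain ⟨i, hi⟩ := Finset.card_pos.mp hcard
      simp only [Finset.mem_filter, Finset.mem_univ, true_and] at hi
      intro h0
      apply hk
      have h0i := congrFun h0 i
      simp only [hx, hi, Pi.zero_apply] at h0i
      simp only [Pi.zero_apply] at hk ⊢
      exact (div_eq_zero_iff.mp h0i).resolve_right (hsne k)
    have hfin := hC (x := x) hxne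
    rw [star_trivial, key g nsize ρ hn x, hY] at hfin
    have hzero : (∑ k, (1 - ρ k k) * (Q g x k - (S g x k) ^ 2 / (nsize k : ℝ))) = 0 := by
      refine Finset.sum_eq_zero fun k _ => ?_
      rw [hS k, hQ k, mul_pow, sq (Real.sqrt (nsize k)), hsq k]
      have hm : (nsize k : ℝ) ≠ 0 := ne_of_gt (hpos k)
      have : (nsize k : ℝ) * (y k) ^ 2 / (nsize k : ℝ) = (y k) ^ 2 :=
        mul_div_cancel_left₀ _ hm
      rw [this, sub_self, mul_zero]
    rw [hzero, zero_add] at hfin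
    exact hfin
  · rintro ⟨_, hA⟩
    refine ⟨hermC, fun x hx => ?_⟩
    rw [star_trivial, key g nsize ρ hn x]
    by_cases hY : (fun k => S g x k / Real.sqrt (nsize k)) = 0
    · have hS0 : ∀ k, S g x k = 0 := by
        intro k
        have hYk := congrFun hY k
        simp only [Pi.zero_apply] at hYk
        exact (div_eq_zero_iff.mp hYk).resolve_right (hsne k)
      rw [hY]
      simp only [Matrix.mulVec_zero, dotProduct_zero, add_zero]
      have hterm : ∀ k, (1 - ρ k k) * (Q g x k - (S g x k) ^ 2 / (nsize k : ℝ)) =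
          (1 - ρ k k) * Q g x k := by
        intro k; rw [hS0 k]; norm_num
      simp only [hterm]
      obtain ⟨i, hi⟩ := Function.ne_iff.mp hx
      have hi' : x i ≠ 0 := by simpa using hi
      refine Finset.sum_pos' (fun k _ => ?_) ⟨g i, Finset.mem_univ _, ?_⟩
      · exact mul_nonneg (le_of_lt (hρlt k))
          (Finset.sum_nonneg fun j _ => sq_nonneg _)
      · refine mul_pos (hρlt (g i)) ?_
        refine Finset.sum_pos' (fun j _ => sq_nonneg _) ⟨i, ?_, by positivity⟩
        simp
    · have h1 : 0 < (fun k => S g x k / Real.sqrt (nsize k)) ⬝ᵥ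
          (reducedA K nsize ρ) *ᵥ (fun k => S g x k / Real.sqrt (nsize k)) := by
        have h2 := hA hY
        rwa [star_trivial] at h2
      have h2 : 0 ≤ ∑ k, (1 - ρ k k) * (Q g x k - (S g x k) ^ 2 / (nsize k : ℝ)) :=
        Finset.sum_nonneg fun k _ => mul_nonneg (le_of_lt (hρlt k)) (hCS x k)
      linarith
end

section
/- For a block correlation matrix C with group sizes n_1,…,n_K and |ρ_kk| < 1, the spectrum of C consists of the eigenvalues of the K×K matrix A (with A_kk = 1 + (n_k−1)ρ_kk, A_kl = ρ_kl√(n_k n_l)) together with the values 1 − ρ_kk, each with multiplicity n_k − 1. -/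
open Matrix Polynomial

lemma eval_charpoly_aux {m : Type*} [Fintype m] [DecidableEq m]
    (M : Matrix m m ℝ) (x : ℝ) :
    M.charpoly.eval x = (Matrix.diagonal (fun _ => x) - M).det := by
  rw [Matrix.charpoly, ← Polynomial.coe_evalRingHom, RingHom.map_det]
  congr 1
  ext i j
  by_cases h : i = j
  · subst h
    simp [Matrix.charmatrix_apply_eq, Matrix.map_apply]
  · simp [Matrix.charmatrix_apply_ne _ _ _ h, Matrix.map_apply, Matrix.diagonal_apply_ne _ h]

/-- The key determinant identity at a real point `x` avoiding the values `1 - ρ_kk`. -/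
lemma det_eval_aux (n K : ℕ) (g : Fin n → Fin K) (nsize : Fin K → ℕ)
    (ρ : Fin K → Fin K → ℝ)
    (hsize : ∀ k, (Finset.univ.filter (fun i => g i = k)).card = nsize k)
    (hn : ∀ k, 1 ≤ nsize k) (x : ℝ) (hx : ∀ k, x ≠ 1 - ρ k k) :
    (Matrix.diagonal (fun _ : Fin n => x) - blockCorr g ρ).det =
      (Matrix.diagonal (fun _ : Fin K => x) - reducedA K nsize ρ).det *
        ∏ k : Fin K, (x - (1 - ρ k k)) ^ (nsize k - 1) := by
  set d : Fin K → ℝ := fun k => 1 - ρ k k with hd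
  have hne : ∀ k, x - d k ≠ 0 := fun k => sub_ne_zero.mpr (hx k)
  set E : Matrix (Fin K) (Fin n) ℝ := Matrix.of fun k i => if g i = k then 1 else 0 with hE
  set ρm : Matrix (Fin K) (Fin K) ℝ := Matrix.of ρ with hρm
  set Δ : Matrix (Fin n) (Fin n) ℝ := Matrix.diagonal (fun i => x - d (g i)) with hΔ
  set Δinv : Matrix (Fin n) (Fin n) ℝ := Matrix.diagonal (fun i => (x - d (g i))⁻¹) with hΔinv
  set Δ' : Matrix (Fin K) (Fin K) ℝ := Matrix.diagonal (fun k => x - d k) with hΔ'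
  set Δ'inv : Matrix (Fin K) (Fin K) ℝ := Matrix.diagonal (fun k => (x - d k)⁻¹) with hΔ'inv
  set S : Matrix (Fin K) (Fin K) ℝ := Matrix.diagonal (fun k => Real.sqrt (nsize k)) with hS
  set Dk : Matrix (Fin K) (Fin K) ℝ :=
    Matrix.diagonal (fun k => (nsize k : ℝ) * (x - d k)⁻¹) with hDk
  -- ρm * E entry
  have hρmE : ∀ k j, (ρm * E) k j = ρ k (g j) := by
    intro k j
    simp only [Matrix.mul_apply, hρm, hE, Matrix.of_apply, mul_ite, mul_one, mul_zero]
    rw [Finset.sum_ite_eq Finset.univ (g j) (fun l => ρ k l)]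
    simp
  -- decomposition of the big matrix
  have hdecomp : Matrix.diagonal (fun _ : Fin n => x) - blockCorr g ρ =
      Δ - E.transpose * (ρm * E) := by
    ext i j
    have hEt : (E.transpose * (ρm * E)) i j = ρ (g i) (g j) := by
      rw [Matrix.mul_apply]
      simp only [hρmE]
      simp only [Matrix.transpose_apply, hρmE, hE, Matrix.of_apply, ite_mul, one_mul, zero_mul]
      rw [Finset.sum_ite_eq Finset.univ (g i) (fun k => ρ k (g j))]
      simp
    by_cases h : i = j
    · subst h
      simp only [Matrix.sub_apply, Matrix.diagonal_apply_eq, hEt, blockCorr, Matrix.of_apply,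
        eq_self_iff_true, if_true, hΔ, hd]
      ring
    · simp [hEt, blockCorr, hΔ, h, Matrix.diagonal_apply_ne _ h, Matrix.one_apply_ne h]
  -- decomposition of the reduced matrix
  have hdecompA : Matrix.diagonal (fun _ : Fin K => x) - reducedA K nsize ρ =
      Δ' - S * ρm * S := by
    ext k l
    have hSS : (S * ρm * S) k l = Real.sqrt (nsize k) * ρ k l * Real.sqrt (nsize l) := by
      rw [hS, hρm, Matrix.mul_diagonal, Matrix.diagonal_mul]
      rfl
    by_cases h : k = l
    · subst h
      have : Real.sqrt (nsize k) * ρ k k * Real.sqrt (nsize k) = (nsize k : ℝ) * ρ k k := by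
        rw [mul_comm (Real.sqrt _) (ρ k k), mul_assoc,
          Real.mul_self_sqrt (Nat.cast_nonneg _)]
        ring
      rw [Matrix.sub_apply, Matrix.sub_apply, hΔ', Matrix.diagonal_apply_eq,
        Matrix.diagonal_apply_eq, hSS, this]
      simp only [reducedA, Matrix.of_apply, eq_self_iff_true, if_true, hd]
      ring
    · have : Real.sqrt ((nsize k : ℝ) * (nsize l : ℝ)) =
          Real.sqrt (nsize k) * Real.sqrt (nsize l) :=
        Real.sqrt_mul (Nat.cast_nonneg _) _
      rw [Matrix.sub_apply, Matrix.sub_apply, hΔ', Matrix.diagonal_apply_ne _ h,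
        Matrix.diagonal_apply_ne _ h, hSS]
      simp only [reducedA, Matrix.of_apply, if_neg h, this]
      ring
  -- E * Δinv * Eᵀ = Dk
  have hEDE : E * Δinv * E.transpose = Dk := by
    ext k l
    have h1 : E * Δinv = Matrix.of fun k i => if g i = k then (x - d (g i))⁻¹ else 0 := by
      ext k' i
      rw [hΔinv, Matrix.mul_diagonal]
      simp only [hE, Matrix.of_apply, ite_mul, one_mul, zero_mul]
    have : (E * Δinv * E.transpose) k l =
        ∑ i : Fin n, (if g i = k then (x - d (g i))⁻¹ else 0) * (if g i = l then 1 else 0) := by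
      rw [h1, Matrix.mul_apply]
      simp only [Matrix.of_apply, Matrix.transpose_apply, hE]
    rw [this]
    by_cases h : k = l
    · subst h
      have : ∀ i : Fin n,
          (if g i = k then (x - d (g i))⁻¹ else 0) * (if g i = k then 1 else 0) =
          if g i = k then (x - d k)⁻¹ else 0 := by
        intro i
        by_cases hik : g i = k <;> simp [hik]
      rw [Finset.sum_congr rfl fun i _ => this i, ← Finset.sum_filter, Finset.sum_const, hsize k]
      simp [hDk, nsmul_eq_mul]
    · have : ∀ i : Fin n,
          (if g i = k then (x - d (g i))⁻¹ else 0) * (if g i = l then 1 else 0) = 0 := by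
        intro i
        by_cases hik : g i = k <;> by_cases hil : g i = l <;>
          simp_all
      rw [Finset.sum_congr rfl fun i _ => this i]
      simp [hDk, Matrix.diagonal_apply_ne _ h]
  -- S * Δ'inv * S = Dk
  have hSDS : S * Δ'inv * S = Dk := by
    ext k l
    by_cases h : k = l
    · subst h
      simp only [hS, hΔ'inv, hDk, Matrix.diagonal_mul_diagonal, Matrix.diagonal_apply_eq]
      rw [mul_comm (Real.sqrt _) ((x - d k)⁻¹), mul_assoc, Real.mul_self_sqrt (Nat.cast_nonneg _)]
      ring
    · simp [hS, hΔ'inv, hDk, Matrix.diagonal_mul_diagonal, Matrix.diagonal_apply_ne _ h]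
  -- determinant of big block: det Δ * det (1 - ρm * Dk)
  have hΔΔinv : Δ * Δinv = 1 := by
    rw [hΔ, hΔinv, Matrix.diagonal_mul_diagonal]
    convert Matrix.diagonal_one
    exact mul_inv_cancel₀ (hne _)
  have hdetC : (Δ - E.transpose * (ρm * E)).det = Δ.det * (1 - ρm * Dk).det := by
    have h1 : Δ - E.transpose * (ρm * E) =
        Δ * (1 - Δinv * (E.transpose * (ρm * E))) := by
      rw [Matrix.mul_sub, mul_one, ← Matrix.mul_assoc Δ Δinv, hΔΔinv, Matrix.one_mul]
    rw [h1, Matrix.det_mul]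
    congr 1
    have h2 : Δinv * (E.transpose * (ρm * E)) = (Δinv * E.transpose) * (ρm * E) := by
      rw [Matrix.mul_assoc]
    have key : (ρm * E) * (Δinv * E.transpose) = ρm * Dk := by
      rw [Matrix.mul_assoc, ← Matrix.mul_assoc E, hEDE]
    rw [h2, Matrix.det_one_sub_mul_comm, key]
  have hΔ'Δ'inv : Δ' * Δ'inv = 1 := by
    rw [hΔ', hΔ'inv, Matrix.diagonal_mul_diagonal]
    convert Matrix.diagonal_one
    exact mul_inv_cancel₀ (hne _)
  have hdetA : (Δ' - S * ρm * S).det = Δ'.det * (1 - ρm * Dk).det := by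
    have h1 : Δ' - S * ρm * S = Δ' * (1 - Δ'inv * (S * ρm * S)) := by
      rw [Matrix.mul_sub, mul_one, ← Matrix.mul_assoc Δ' Δ'inv, hΔ'Δ'inv, Matrix.one_mul]
    rw [h1, Matrix.det_mul]
    congr 1
    have h2 : Δ'inv * (S * ρm * S) = (Δ'inv * S) * (ρm * S) := by
      simp only [Matrix.mul_assoc]
    have key : (ρm * S) * (Δ'inv * S) = ρm * Dk := by
      rw [Matrix.mul_assoc, ← Matrix.mul_assoc S, hSDS]
    rw [h2, Matrix.det_one_sub_mul_comm, key]
  -- det Δ as a product over groups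
  have hdetΔ : Δ.det = ∏ k : Fin K, (x - d k) ^ nsize k := by
    rw [hΔ, Matrix.det_diagonal,
      ← Finset.prod_fiberwise Finset.univ g (fun i => x - d (g i))]
    refine Finset.prod_congr rfl fun k _ => ?_
    have hcongr : ∀ i ∈ Finset.univ.filter (fun i => g i = k), x - d (g i) = x - d k := by
      intro i hi
      rw [(Finset.mem_filter.mp hi).2]
    rw [Finset.prod_congr rfl hcongr, Finset.prod_const, hsize k]
  have hdetΔ' : Δ'.det = ∏ k : Fin K, (x - d k) := by
    rw [hΔ', Matrix.det_diagonal]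
  -- assemble
  rw [hdecomp, hdecompA, hdetC, hdetA, hdetΔ, hdetΔ']
  have hpow : ∀ k : Fin K, (x - d k) ^ nsize k = (x - d k) * (x - d k) ^ (nsize k - 1) := by
    intro k
    conv_lhs => rw [← Nat.sub_add_cancel (hn k)]
    rw [pow_succ]
    ring
  rw [Finset.prod_congr rfl fun k _ => hpow k, Finset.prod_mul_distrib]
  ring

/-- The characteristic polynomial of a block correlation matrix
factors as the characteristic polynomial of the reduced matrix `A` times
`∏ₖ (X - (1 - ρ_kk))^{n_k - 1}`; i.e. the spectrum of `C` consists of the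
eigenvalues of `A` together with `1 - ρ_kk` with multiplicity `n_k - 1`. -/
theorem stmt_14 (n K : ℕ) (g : Fin n → Fin K) (nsize : Fin K → ℕ)
    (ρ : Fin K → Fin K → ℝ) (hsym : ∀ k l, ρ k l = ρ l k)
    (hsize : ∀ k, (Finset.univ.filter (fun i => g i = k)).card = nsize k)
    (hn : ∀ k, 1 ≤ nsize k) (hdiag : ∀ k, |ρ k k| < 1) :
    (blockCorr g ρ).charpoly =
      (reducedA K nsize ρ).charpoly *
        ∏ k : Fin K, (X - C (1 - ρ k k)) ^ (nsize k - 1) := by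
  apply Polynomial.eq_of_infinite_eval_eq
  have hfin : (Set.range (fun k : Fin K => 1 - ρ k k)).Finite := Set.finite_range _
  apply Set.Infinite.mono (s := (Set.range (fun k : Fin K => 1 - ρ k k))ᶜ)
  · intro x hx
    have hx' : ∀ k, x ≠ 1 - ρ k k := by
      intro k hk
      exact hx ⟨k, hk.symm⟩
    show Polynomial.eval x _ = Polynomial.eval x _
    rw [eval_charpoly_aux, eval_mul, eval_charpoly_aux, eval_prod]
    rw [det_eval_aux n K g nsize ρ hsize hn x hx']
    congr 1
    refine Finset.prod_congr rfl fun k _ => ?_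
    simp
  · exact hfin.infinite_compl
end

section
/- If a block correlation matrix C with group sizes n_1,…,n_K (min n_k ≥ 2) is positive definite and all ρ_kk ≥ 0 and the matrix Λ_n^{1/2} A* Λ_n^{1/2} = A − Ψ is positive semi-definite, then C admits a clustered factor representation with at most K factors. -/
open Matrix

/-- If a block correlation matrix with all group sizes ≥ 2 is
positive definite, all within-group correlations are nonnegative, and
`Λₙ^{1/2} A* Λₙ^{1/2} = A - Ψ` is psd, then `C` admits a clustered factor
representation with at most `K` factors. -/
theorem stmt_15 (n K : ℕ) (g : Fin n → Fin K) (nsize : Fin K → ℕ)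
    (ρ : Fin K → Fin K → ℝ) (hsym : ∀ k l, ρ k l = ρ l k)
    (hsize : ∀ k, (Finset.univ.filter (fun i => g i = k)).card = nsize k)
    (hn : ∀ k, 2 ≤ nsize k)
    (hpd : (blockCorr g ρ).PosDef)
    (hnonneg : ∀ k, 0 ≤ ρ k k)
    (hpsd : (Matrix.diagonal (fun k => Real.sqrt (nsize k)) *
        (Matrix.of ρ : Matrix (Fin K) (Fin K) ℝ) *
        Matrix.diagonal (fun k => Real.sqrt (nsize k))).PosSemidef) :
    ∃ r : ℕ, r ≤ K ∧ ∃ β : Fin K → Fin r → ℝ,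
      (∀ k l, ρ k l = β k ⬝ᵥ β l) ∧ ∀ k, β k ⬝ᵥ β k < 1 := by
  -- step 1: ρ k k < 1
  have hlt : ∀ k, ρ k k < 1 := by
    intro k
    obtain ⟨i, hi, j, hj, hij⟩ := Finset.one_lt_card.mp
      (by rw [hsize k]; have := hn k; omega : 1 < (Finset.univ.filter (fun i => g i = k)).card)
    simp only [Finset.mem_filter] at hi hj
    set x : Fin n → ℝ := Pi.single i 1 - Pi.single j 1 with hx
    have hxne : x ≠ 0 := by
      intro h
      have := congrFun h i
      simp [hx, Pi.single_apply, hij] at this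
    have hpos := hpd.dotProduct_mulVec_pos hxne
    have hMx : ∀ a, (blockCorr g ρ *ᵥ x) a = blockCorr g ρ a i - blockCorr g ρ a j := by
      intro a
      have : blockCorr g ρ *ᵥ x = blockCorr g ρ *ᵥ Pi.single i 1 - blockCorr g ρ *ᵥ Pi.single j 1 := by
        rw [hx, mulVec_sub]
      rw [this]
      simp [mulVec_single]
    have hq : star x ⬝ᵥ (blockCorr g ρ *ᵥ x) = 2 - 2 * ρ k k := by
      have hst : star x = x := by simp [hx]
      rw [hst, hx, sub_dotProduct, single_dotProduct, single_dotProduct, hMx, hMx]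
      simp [blockCorr, hij, hij.symm, hi.2, hj.2, hsym k k]
      ring
    rw [hq] at hpos
    linarith
  -- step 2: of ρ is psd
  have hρpsd : (Matrix.of ρ : Matrix (Fin K) (Fin K) ℝ).PosSemidef := by
    have hD : ∀ k, Real.sqrt (nsize k) ≠ 0 := fun k =>
      ne_of_gt (Real.sqrt_pos.mpr (by have := hn k; positivity))
    have h := hpsd.conjTranspose_mul_mul_same
      (Matrix.diagonal (fun k => (Real.sqrt (nsize k))⁻¹))
    have heq : (Matrix.diagonal (fun k => (Real.sqrt (nsize k))⁻¹))ᴴ *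
        (Matrix.diagonal (fun k => Real.sqrt (nsize k)) *
        (Matrix.of ρ : Matrix (Fin K) (Fin K) ℝ) *
        Matrix.diagonal (fun k => Real.sqrt (nsize k))) *
        (Matrix.diagonal (fun k => (Real.sqrt (nsize k))⁻¹)) =
        (Matrix.of ρ : Matrix (Fin K) (Fin K) ℝ) := by
      rw [diagonal_conjTranspose]
      simp only [star_trivial]
      have h1 : (fun k => (Real.sqrt (nsize k))⁻¹ * Real.sqrt (nsize k)) = fun _ => (1:ℝ) := by
        funext k; exact inv_mul_cancel₀ (hD k)
      have h2 : (fun k => Real.sqrt (nsize k) * (Real.sqrt (nsize k))⁻¹) = fun _ => (1:ℝ) := by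
        funext k; exact mul_inv_cancel₀ (hD k)
      simp only [Matrix.mul_assoc]
      rw [diagonal_mul_diagonal, h2, diagonal_one, Matrix.mul_one, ← Matrix.mul_assoc,
        diagonal_mul_diagonal, h1, diagonal_one, Matrix.one_mul]
    rwa [heq] at h
  obtain ⟨B, hB⟩ : ∃ B : Matrix (Fin K) (Fin K) ℝ, (Matrix.of ρ : Matrix (Fin K) (Fin K) ℝ) = Bᴴ * B := by
    open scoped MatrixOrder in
    obtain ⟨B, hB⟩ := CStarAlgebra.nonneg_iff_eq_star_mul_self.mp hρpsd.nonneg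
    exact ⟨B, by rw [hB, star_eq_conjTranspose]⟩
  refine ⟨K, le_rfl, fun k m => B m k, fun k l => ?_, fun k => ?_⟩
  · have := congrFun (congrFun hB k) l
    simp only [Matrix.mul_apply, conjTranspose_apply, star_trivial, of_apply] at this
    exact this
  · have := congrFun (congrFun hB k) k
    simp only [Matrix.mul_apply, conjTranspose_apply, star_trivial, of_apply] at this
    rw [dotProduct]
    rw [← this]
    exact hlt k
end
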